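/- arXiv:2406.19252 — 3 statements merged into one kernel-verified Lean document; each statement's English description precedes it below -/
import Mathlib

section
/- Let n ≥ 1 and let E ⊆ 𝔻ⁿ be a discrete set that is separated and well-approximated. Then the critical exponent satisfies δ(E) ≤ upper box dimension of L(E). -/
open Metric Set Filter
open scoped ENNReal NNReal

noncomputable section

/-- Points of `ℝⁿ` (Euclidean space). -/
abbrev Pt (n : ℕ) := EuclideanSpace ℝ (Fin n)

/-- `E` is a discrete set: every point of `E` is isolated in `E`. -/
def IsDiscreteSet {n : ℕ} (E : Set (Pt n)) : Prop :=
  ∀ x ∈ E, ∃ r > 0, closedBall x r ∩ E = {x}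

/-- The limit set `L(E) = cl(E) \ E`. -/
def limitSet {n : ℕ} (E : Set (Pt n)) : Set (Pt n) := closure E \ E

/-- `E ⊆ 𝔻ⁿ` is separated. -/
def SeparatedSet {n : ℕ} (E : Set (Pt n)) : Prop :=
  ∃ c₁ : ℝ, 0 < c₁ ∧ c₁ < 1 ∧ ∀ x ∈ E, closedBall x (c₁ * (1 - ‖x‖)) ∩ E = {x}

/-- `E ⊆ 𝔻ⁿ` is well-approximated. -/
def WellApproximated {n : ℕ} (E : Set (Pt n)) : Prop :=
  ∃ c₂ : ℝ, 1 ≤ c₂ ∧ ∀ x ∈ E, ∃ z ∈ limitSet E, dist x z ≤ c₂ * (1 - ‖x‖)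

/-- `E` is `α`-separated. -/
def AlphaSeparated {n : ℕ} (E : Set (Pt n)) (α : ℝ) : Prop :=
  ∃ c₁ : ℝ, 0 < c₁ ∧ ∀ x ∈ E, closedBall x (c₁ * (1 - ‖x‖) ^ α) ∩ E = {x}

/-- `E` is `β`-well-approximated. -/
def BetaWellApproximated {n : ℕ} (E : Set (Pt n)) (β : ℝ) : Prop :=
  ∃ c₂ : ℝ, 1 ≤ c₂ ∧ ∀ x ∈ E, ∃ z ∈ limitSet E, dist x z ≤ c₂ * (1 - ‖x‖) ^ β

/-- The accumulation series `S_E(s) = ∑_{x ∈ E} (1 - |x|)^s` (valued in `ℝ≥0∞`). -/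
def accSeries {n : ℕ} (E : Set (Pt n)) (s : ℝ) : ℝ≥0∞ :=
  ∑' x : E, ENNReal.ofReal ((1 - ‖(x : Pt n)‖) ^ s)

/-- The critical exponent `δ(E) = inf { s ≥ 0 : S_E(s) < ∞ }`, with `inf ∅ = ∞`. -/
def critExp {n : ℕ} (E : Set (Pt n)) : ℝ≥0∞ :=
  ⨅ (s : ℝ≥0) (_ : accSeries E (s : ℝ) < ⊤), (s : ℝ≥0∞)

/-- The set of `c`-radial limit points of `E`. -/
def radialPoints {n : ℕ} (E : Set (Pt n)) (c : ℝ) : Set (Pt n) :=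
  {z | ‖z‖ = 1 ∧ ∀ r > 0, ∃ x ∈ E,
    dist x z ≤ c * (1 - ‖x‖) ∧ c * (1 - ‖x‖) ≤ c * r}

/-- The radial limit set `L_rad(E) = ⋃_{c ≥ 1} L_c(E)`. -/
def radialLimitSet {n : ℕ} (E : Set (Pt n)) : Set (Pt n) :=
  ⋃ c ∈ Ici (1 : ℝ), radialPoints E c

/-- The set of `(γ, c)`-radial limit points of `E`. -/
def gammaRadialPoints {n : ℕ} (E : Set (Pt n)) (γ c : ℝ) : Set (Pt n) :=
  {z | z ∈ limitSet E ∧ ∀ r > 0, ∃ x ∈ E,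
    dist x z ≤ c * (1 - ‖x‖) ^ γ ∧ c * (1 - ‖x‖) ^ γ ≤ c * r ^ γ}

/-- The `γ`-radial limit set `L_rad^γ(E) = ⋃_{c ≥ 1} L_c^γ(E)`. -/
def gammaRadialLimitSet {n : ℕ} (E : Set (Pt n)) (γ : ℝ) : Set (Pt n) :=
  ⋃ c ∈ Ici (1 : ℝ), gammaRadialPoints E γ c

/-- The packing number `N_δ(F)`: the maximal cardinality of a packing of `F` by
pairwise disjoint closed balls of radius `δ` centred in `F`. -/
def packingNumber {n : ℕ} (F : Set (Pt n)) (δ : ℝ) : ℕ∞ :=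
  ⨆ (Z : Finset (Pt n)) (_ : ↑Z ⊆ F)
    (_ : (Z : Set (Pt n)).PairwiseDisjoint fun x => closedBall x δ), (Z.card : ℕ∞)

/-- The upper box dimension `limsup_{δ → 0⁺} log N_δ(F) / (-log δ)`. -/
def upperBoxDim {n : ℕ} (F : Set (Pt n)) : ℝ≥0∞ :=
  limsup (fun δ : ℝ =>
    ENNReal.ofReal (Real.log ((packingNumber F δ).toNat : ℝ) / (-Real.log δ)))
    (nhdsWithin 0 (Ioi 0))

/-- The lower box dimension `liminf_{δ → 0⁺} log N_δ(F) / (-log δ)`. -/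
def lowerBoxDim {n : ℕ} (F : Set (Pt n)) : ℝ≥0∞ :=
  liminf (fun δ : ℝ =>
    ENNReal.ofReal (Real.log ((packingNumber F δ).toNat : ℝ) / (-Real.log δ)))
    (nhdsWithin 0 (Ioi 0))

/-! Cut `E` into the dyadic shells `2⁻ᵏ⁻¹ < 1 - ‖x‖ ≤ 2⁻ᵏ` and fix `t' < t` above the upper box
dimension of `L = L(E)`. Every point of the `k`-th shell lies within `(c₂ + 2) 2⁻ᵏ` of a maximal
`2⁻ᵏ`-packing of `L`, which has `N_{2⁻ᵏ}(L) ≲ 2^{k t'}` centres, and the shell is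
`c₁ 2⁻ᵏ⁻¹`-separated, so a volume count allows only boundedly many shell points near each centre.
The shell therefore has `≲ 2^{k t'}` points and contributes `≲ 2^{-k (t - t')}` to `S_E(t)`. -/

theorem lt_dist_of_closedBall_inter_eq_singleton {X : Type*} [PseudoMetricSpace X] {E : Set X}
    {x y : X} {r : ℝ} (h : closedBall x r ∩ E = {x}) (hy : y ∈ E) (hxy : x ≠ y) :
    r < dist x y := by
  by_contra! hle
  have : y ∈ closedBall x r ∩ E := ⟨by rwa [mem_closedBall, dist_comm], hy⟩
  exact hxy (h ▸ this).symm

theorem ofReal_lt_edist_iff {X : Type*} [PseudoMetricSpace X] {r : ℝ} (hr : 0 ≤ r) {x y : X} :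
    ENNReal.ofReal r < edist x y ↔ r < dist x y := by
  rw [edist_dist, ENNReal.ofReal_lt_ofReal_iff_of_nonneg hr]

theorem Metric.packingNumber_ne_top_of_totallyBounded {X : Type*} [PseudoEMetricSpace X]
    {A : Set X} (hA : TotallyBounded A) {ε : ℝ≥0} (hε : ε ≠ 0) : Metric.packingNumber ε A ≠ ⊤ := by
  obtain ⟨N, -, hNfin, hN⟩ := exists_finite_isCover_of_totallyBounded (ε := ε / 2) (by simpa) hA
  have h := packingNumber_two_mul_le_externalCoveringNumber (ε / 2) A
  rw [mul_div_cancel₀ _ two_ne_zero] at h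
  exact ne_top_of_le_ne_top hNfin.encard_lt_top.ne (h.trans hN.externalCoveringNumber_le_encard)

theorem ENNReal.tsum_le_mul_of_card_le {α : Type*} {s : Set α} {f : α → ℝ≥0∞} {c M : ℝ≥0∞}
    (hf : ∀ x ∈ s, f x ≤ c) (hcard : ∀ S : Finset α, ↑S ⊆ s → (S.card : ℝ≥0∞) ≤ M) :
    ∑' x : s, f x ≤ M * c := by
  rw [ENNReal.tsum_eq_iSup_sum]
  refine iSup_le fun S => ?_
  calc ∑ x ∈ S, f x ≤ S.card * c := by
        simpa using Finset.sum_le_card_nsmul S _ c fun x _ => hf x x.2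
    _ = (S.map (Function.Embedding.subtype _)).card * c := by rw [Finset.card_map]
    _ ≤ M * c := by
        gcongr
        exact hcard _ fun x hx => by
          obtain ⟨y, -, rfl⟩ := Finset.mem_map.1 hx
          exact y.2

theorem ENNReal.tsum_ofReal_mul_pow_lt_top {A q : ℝ} (hq : 0 ≤ q) (hq1 : q < 1) :
    ∑' k : ℕ, ENNReal.ofReal (A * q ^ k) < ⊤ := by
  simp_rw [ENNReal.ofReal_mul' (pow_nonneg hq _), ENNReal.ofReal_pow hq, ENNReal.tsum_mul_left,
    ENNReal.tsum_geometric]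
  exact ENNReal.mul_lt_top ENNReal.ofReal_lt_top
    (ENNReal.inv_lt_top.2 (tsub_pos_of_lt (ENNReal.ofReal_lt_one.2 hq1)))

theorem natCast_le_rpow_neg_of_ofReal_log_div_lt {N : ℕ} {δ : ℝ} {s : ℝ≥0} (hδ : 0 < δ)
    (hδ1 : δ < 1) (h : ENNReal.ofReal (Real.log N / (-Real.log δ)) < s) :
    (N : ℝ) ≤ δ ^ (-(s : ℝ)) := by
  have hlogδ : 0 < -Real.log δ := neg_pos.2 (Real.log_neg hδ hδ1)
  rw [ENNReal.ofReal_lt_coe_iff (div_nonneg (Real.log_natCast_nonneg N) hlogδ.le),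
    div_lt_iff₀ hlogδ] at h
  rcases N.eq_zero_or_pos with rfl | hN
  · simpa using (Real.rpow_pos_of_pos hδ _).le
  · refine ((Real.log_lt_log_iff (by positivity) (by positivity)).1 ?_).le
    rwa [Real.log_rpow hδ, neg_mul_comm]

section Counting

open MeasureTheory Module

variable {V : Type*} [NormedAddCommGroup V] [NormedSpace ℝ V] [FiniteDimensional ℝ V]

theorem card_le_of_pairwise_lt_dist {Z : Finset V} {x₀ : V} {r R : ℝ} (hr : 0 < r) (hR : 0 ≤ R)
    (hZ : ∀ z ∈ Z, dist z x₀ ≤ R) (hsep : (Z : Set V).Pairwise fun a b => 2 * r < dist a b) :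
    (Z.card : ℝ) ≤ ((R + r) / r) ^ finrank ℝ V := by
  borelize V
  set μ : Measure V := Measure.addHaar
  have hdisj : (Z : Set V).PairwiseDisjoint (closedBall · r) := fun a ha b hb hab =>
    closedBall_disjoint_closedBall (by linarith [hsep ha hb hab])
  have hsub : ⋃ z ∈ Z, closedBall z r ⊆ closedBall x₀ (R + r) :=
    iUnion₂_subset fun z hz => closedBall_subset_closedBall' (by linarith [hZ z hz])
  have hvol : (Z.card : ℝ≥0∞) * ENNReal.ofReal (r ^ finrank ℝ V) * μ (ball 0 1)
      ≤ ENNReal.ofReal ((R + r) ^ finrank ℝ V) * μ (ball 0 1) :=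
    calc _ = μ (⋃ z ∈ Z, closedBall z r) := by
          rw [measure_biUnion_finset hdisj fun _ _ => measurableSet_closedBall]
          simp [μ.addHaar_closedBall _ hr.le, mul_assoc]
      _ ≤ μ (closedBall x₀ (R + r)) := measure_mono hsub
      _ = _ := μ.addHaar_closedBall _ (by positivity)
  have hcard := (ENNReal.mul_le_mul_iff_left (measure_ball_pos μ _ one_pos).ne'
    measure_ball_lt_top.ne).1 hvol
  rw [div_pow, le_div_iff₀ (by positivity)]
  have := ENNReal.toReal_le_of_le_ofReal (by positivity) hcard
  rwa [ENNReal.toReal_mul, ENNReal.toReal_ofReal (by positivity), ENNReal.toReal_natCast] at this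

theorem card_le_card_mul_of_pairwise_lt_dist {S C : Finset V} {r R : ℝ} (hr : 0 < r) (hR : 0 ≤ R)
    (hsep : (S : Set V).Pairwise fun a b => 2 * r < dist a b)
    (hnet : ∀ x ∈ S, ∃ c ∈ C, dist x c ≤ R) :
    (S.card : ℝ) ≤ C.card * ((R + r) / r) ^ finrank ℝ V := by
  classical
  have hcover : S ⊆ C.biUnion fun c => S.filter (dist · c ≤ R) := fun x hx => by
    obtain ⟨c, hc, hxc⟩ := hnet x hx
    exact Finset.mem_biUnion.2 ⟨c, hc, Finset.mem_filter.2 ⟨hx, hxc⟩⟩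
  calc (S.card : ℝ) ≤ ∑ c ∈ C, ((S.filter (dist · c ≤ R)).card : ℝ) := by
        exact_mod_cast (Finset.card_le_card hcover).trans Finset.card_biUnion_le
    _ ≤ ∑ _c ∈ C, ((R + r) / r) ^ finrank ℝ V := Finset.sum_le_sum fun c _ =>
        card_le_of_pairwise_lt_dist hr hR (fun z hz => (Finset.mem_filter.1 hz).2)
          (hsep.mono fun x hx => (Finset.mem_filter.1 hx).1)
    _ = _ := by simp

end Counting

section Shells

variable {V : Type*} [NormedAddCommGroup V]

def shell (E : Set V) (δ : ℝ) : Set V := {x ∈ E | δ / 2 < 1 - ‖x‖ ∧ 1 - ‖x‖ ≤ δ}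

theorem subset_iUnion_shell {E : Set V} (hE : E ⊆ ball 0 1) :
    E ⊆ ⋃ k : ℕ, shell E (2⁻¹ ^ k) := by
  intro x hx
  have hx1 : ‖x‖ < 1 := mem_ball_zero_iff.1 (hE hx)
  obtain ⟨k, hk, hk'⟩ := exists_nat_pow_near_of_lt_one (x := 1 - ‖x‖) (y := (2 : ℝ)⁻¹)
    (by linarith) (by linarith [norm_nonneg x]) (by norm_num) (by norm_num)
  exact mem_iUnion.2 ⟨k, hx, by rwa [pow_succ, ← div_eq_mul_inv] at hk, hk'⟩

theorem card_le_of_subset_shell [NormedSpace ℝ V] [FiniteDimensional ℝ V] {E L : Set V}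
    {c₁ c₂ δ : ℝ} (hc₁ : 0 < c₁) (hc₂ : 0 ≤ c₂) (hδ : 0 < δ)
    (hsep : ∀ x ∈ E, ∀ y ∈ E, x ≠ y → c₁ * (1 - ‖x‖) < dist x y)
    (happrox : ∀ x ∈ E, ∃ z ∈ L, dist x z ≤ c₂ * (1 - ‖x‖))
    {C : Finset V} (hC : ∀ z ∈ L, ∃ c ∈ C, dist z c ≤ 2 * δ)
    {S : Finset V} (hS : ↑S ⊆ shell E δ) :
    (S.card : ℝ) ≤ C.card * ((4 * (c₂ + 2) + c₁) / c₁) ^ Module.finrank ℝ V := by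
  have key := card_le_card_mul_of_pairwise_lt_dist (S := S) (C := C) (r := c₁ * δ / 4)
    (R := (c₂ + 2) * δ) (by positivity) (by positivity) ?_ ?_
  · have hratio : ((c₂ + 2) * δ + c₁ * δ / 4) / (c₁ * δ / 4) = (4 * (c₂ + 2) + c₁) / c₁ := by
      field_simp
    rwa [hratio] at key
  · intro x hx y hy hxy
    obtain ⟨hxE, hxδ, -⟩ := hS hx
    nlinarith [hsep x hxE y (hS hy).1 hxy]
  · intro x hx
    obtain ⟨hxE, -, hxδ⟩ := hS hx
    obtain ⟨z, hzL, hxz⟩ := happrox x hxE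
    obtain ⟨c, hc, hzc⟩ := hC z hzL
    refine ⟨c, hc, ?_⟩
    calc dist x c ≤ dist x z + dist z c := dist_triangle _ _ _
      _ ≤ c₂ * δ + 2 * δ := add_le_add (hxz.trans (mul_le_mul_of_nonneg_left hxδ hc₂)) hzc
      _ = (c₂ + 2) * δ := by ring

end Shells

section Packing

variable {n : ℕ} {F : Set (Pt n)} {δ : ℝ}

theorem card_le_packingNumber {Z : Finset (Pt n)} (hZF : ↑Z ⊆ F)
    (hZ : (Z : Set (Pt n)).PairwiseDisjoint fun x => closedBall x δ) :
    (Z.card : ℕ∞) ≤ packingNumber F δ :=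
  le_iSup₂_of_le Z hZF (le_iSup_of_le hZ le_rfl)

theorem packingNumber_anti {ε : ℝ} (h : ε ≤ δ) : packingNumber F δ ≤ packingNumber F ε :=
  iSup₂_le fun _ hZF => iSup_le fun hZ =>
    card_le_packingNumber hZF (hZ.mono fun _ => closedBall_subset_closedBall h)

theorem packingNumber_le_metric_packingNumber (hδ : 0 ≤ δ) :
    packingNumber F δ ≤ Metric.packingNumber δ.toNNReal F := by
  refine iSup₂_le fun Z hZF => iSup_le fun hZ => ?_
  rw [← encard_coe_eq_coe_finsetCard]
  refine IsSeparated.encard_le_packingNumber hZF fun a ha b hb hab => ?_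
  have hb : b ∉ closedBall a δ := fun hba =>
    Set.disjoint_left.1 (hZ ha hb hab) hba (mem_closedBall_self hδ)
  rw [mem_closedBall, not_le, dist_comm] at hb
  exact (ofReal_lt_edist_iff hδ).2 hb

theorem packingNumber_ne_top (hF : TotallyBounded F) (hδ : 0 < δ) : packingNumber F δ ≠ ⊤ :=
  ne_top_of_le_ne_top
    (Metric.packingNumber_ne_top_of_totallyBounded hF (Real.toNNReal_pos.2 hδ).ne')
    (packingNumber_le_metric_packingNumber hδ.le)

theorem exists_finset_net_card_le_packingNumber (hF : TotallyBounded F) (hδ : 0 < δ) :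
    ∃ C : Finset (Pt n), C.card ≤ (packingNumber F δ).toNat ∧
      ∀ z ∈ F, ∃ c ∈ C, dist z c ≤ 2 * δ := by
  set ε := (2 * δ).toNNReal
  have hfin : Metric.packingNumber ε F ≠ ⊤ :=
    Metric.packingNumber_ne_top_of_totallyBounded hF (Real.toNNReal_pos.2 (by positivity)).ne'
  have hCfin : (maximalSeparatedSet ε F).Finite := by
    rw [← Set.encard_ne_top_iff, encard_maximalSeparatedSet hfin]
    exact hfin
  refine ⟨hCfin.toFinset, ?_, fun z hz => ?_⟩
  · have hdisj : (hCfin.toFinset : Set (Pt n)).PairwiseDisjoint fun x => closedBall x δ := by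
      intro a ha b hb hab
      rw [Finite.coe_toFinset] at ha hb
      have hsep :=
        (ofReal_lt_edist_iff (by positivity)).1 (isSeparated_maximalSeparatedSet ha hb hab)
      exact closedBall_disjoint_closedBall (by linarith)
    have h := card_le_packingNumber
      (by simpa using maximalSeparatedSet_subset (ε := ε) (A := F)) hdisj
    simpa using ENat.toNat_le_toNat h (packingNumber_ne_top hF hδ)
  · obtain ⟨c, hc, hzc⟩ := mem_iUnion₂.1 (isCover_iff_subset_iUnion_closedBall.1
      (isCover_maximalSeparatedSet hfin) hz)
    refine ⟨c, hCfin.mem_toFinset.2 hc, ?_⟩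
    simpa [ε, Real.coe_toNNReal _ (by positivity : (0 : ℝ) ≤ 2 * δ)] using hzc

end Packing

theorem card_le_mul_packingNumber_of_subset_shell {n : ℕ} {E L : Set (Pt n)} {c₁ c₂ δ : ℝ}
    (hc₁ : 0 < c₁) (hc₂ : 0 ≤ c₂) (hδ : 0 < δ)
    (hsep : ∀ x ∈ E, closedBall x (c₁ * (1 - ‖x‖)) ∩ E = {x})
    (happrox : ∀ x ∈ E, ∃ z ∈ L, dist x z ≤ c₂ * (1 - ‖x‖)) (hL : TotallyBounded L)
    {S : Finset (Pt n)} (hS : ↑S ⊆ shell E δ) :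
    (S.card : ℝ) ≤ ((4 * (c₂ + 2) + c₁) / c₁) ^ n * (packingNumber L δ).toNat := by
  obtain ⟨C, hCcard, hC⟩ := exists_finset_net_card_le_packingNumber hL hδ
  have hS := card_le_of_subset_shell hc₁ hc₂ hδ
    (fun x hx y hy hxy => lt_dist_of_closedBall_inter_eq_singleton (hsep x hx) hy hxy) happrox hC hS
  rw [finrank_euclideanSpace_fin, mul_comm] at hS
  exact hS.trans (by gcongr)

theorem exists_toNat_packingNumber_le_mul_rpow {n : ℕ} {F : Set (Pt n)} (hF : TotallyBounded F)
    {s : ℝ≥0} (hs : upperBoxDim F < s) :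
    ∃ A : ℝ, ∀ δ, 0 < δ → δ ≤ 1 →
      ((packingNumber F δ).toNat : ℝ) ≤ A * δ ^ (-(s : ℝ)) := by
  obtain ⟨u, hu, hsub⟩ := mem_nhdsGT_iff_exists_Ioo_subset.1 (eventually_lt_of_limsup_lt hs)
  have hu1 : 0 < min u 1 := lt_min hu one_pos
  set δ₀ := min u 1 / 2
  have hδ₀ : 0 < δ₀ := half_pos hu1
  have hδ₀u : δ₀ < min u 1 := half_lt_self hu1
  refine ⟨max 1 ((packingNumber F δ₀).toNat : ℝ), fun δ hδ hδ1 => ?_⟩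
  rcases lt_or_ge δ (min u 1) with hδu | hδu
  · calc ((packingNumber F δ).toNat : ℝ) ≤ δ ^ (-(s : ℝ)) :=
          natCast_le_rpow_neg_of_ofReal_log_div_lt hδ (hδu.trans_le (min_le_right _ _))
            (hsub ⟨hδ, hδu.trans_le (min_le_left _ _)⟩)
      _ ≤ _ := le_mul_of_one_le_left (by positivity) (le_max_left _ _)
  · calc ((packingNumber F δ).toNat : ℝ) ≤ (packingNumber F δ₀).toNat := by
          exact_mod_cast ENat.toNat_le_toNat (packingNumber_anti (by linarith))
            (packingNumber_ne_top hF hδ₀)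
      _ ≤ max 1 ((packingNumber F δ₀).toNat : ℝ) := le_max_right _ _
      _ ≤ _ := le_mul_of_one_le_right (by positivity)
          (Real.one_le_rpow_of_pos_of_le_one_of_nonpos hδ hδ1 (neg_nonpos.2 s.2))

theorem accSeries_le_tsum_shell {n : ℕ} {E : Set (Pt n)} (hE : E ⊆ ball 0 1) {s : ℝ}
    (hs : 0 ≤ s) {M : ℕ → ℝ}
    (hM : ∀ k (S : Finset (Pt n)), ↑S ⊆ shell E (2⁻¹ ^ k) → (S.card : ℝ) ≤ M k) :
    accSeries E s ≤ ∑' k, ENNReal.ofReal (M k * ((2⁻¹ : ℝ) ^ k) ^ s) := by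
  set g : Pt n → ℝ≥0∞ := fun x => ENNReal.ofReal ((1 - ‖x‖) ^ s)
  calc accSeries E s ≤ ∑' x : ⋃ k : ℕ, shell E (2⁻¹ ^ k), g x :=
        ENNReal.tsum_mono_subtype g (subset_iUnion_shell hE)
    _ ≤ ∑' k : ℕ, ∑' x : shell E (2⁻¹ ^ k), g x := ENNReal.tsum_iUnion_le_tsum g _
    _ ≤ _ := ENNReal.tsum_le_tsum fun k => ?_
  rw [ENNReal.ofReal_mul (by simpa using hM k ∅ (by simp))]
  refine ENNReal.tsum_le_mul_of_card_le (fun x hx => ?_) fun S hS => ?_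
  · have hδ : (0 : ℝ) < 2⁻¹ ^ k := by positivity
    exact ENNReal.ofReal_le_ofReal (Real.rpow_le_rpow (by linarith [hx.2.1]) hx.2.2 hs)
  · rw [← ENNReal.ofReal_natCast]
    exact ENNReal.ofReal_le_ofReal (hM k S hS)

theorem accSeries_lt_top_of_card_shell_le {n : ℕ} {E : Set (Pt n)} (hE : E ⊆ ball 0 1)
    {s s' A : ℝ} (hs : 0 ≤ s) (hs' : s' < s)
    (hcard : ∀ k (S : Finset (Pt n)), ↑S ⊆ shell E (2⁻¹ ^ k) →
      (S.card : ℝ) ≤ A * ((2⁻¹ : ℝ) ^ k) ^ (-s')) :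
    accSeries E s < ⊤ := by
  have hterm : ∀ k : ℕ, A * ((2⁻¹ : ℝ) ^ k) ^ (-s') * ((2⁻¹ : ℝ) ^ k) ^ s
      = A * ((2⁻¹ : ℝ) ^ (s - s')) ^ k := by
    intro k
    rw [mul_assoc, ← Real.rpow_add (by positivity), ← Real.rpow_natCast_mul (by norm_num),
      ← Real.rpow_mul_natCast (by norm_num)]
    ring_nf
  refine (accSeries_le_tsum_shell hE hs hcard).trans_lt ?_
  simp_rw [hterm]
  exact ENNReal.tsum_ofReal_mul_pow_lt_top (by positivity)
    (Real.rpow_lt_one (by norm_num) (by norm_num) (sub_pos.2 hs'))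

theorem critExp_le_of_forall_accSeries_lt_top {n : ℕ} {E : Set (Pt n)} {D : ℝ≥0∞}
    (h : ∀ t : ℝ≥0, D < t → accSeries E t < ⊤) : critExp E ≤ D :=
  le_of_forall_gt_imp_ge_of_dense fun a ha => by
    obtain ⟨t, hDt, hta⟩ := ENNReal.lt_iff_exists_nnreal_btwn.1 ha
    exact (iInf₂_le t (h t hDt)).trans hta.le

theorem critExp_le_upperBoxDim_limitSet_general {n : ℕ}
    (E : Set (Pt n)) (hE : E ⊆ ball 0 1)
    (hsep : SeparatedSet E) (hwa : WellApproximated E) :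
    critExp E ≤ upperBoxDim (limitSet E) := by
  obtain ⟨c₁, hc₁, -, hsep⟩ := hsep
  obtain ⟨c₂, hc₂, hwa⟩ := hwa
  have hL : TotallyBounded (limitSet E) :=
    (isCompact_closedBall (0 : Pt n) 1).totallyBounded.subset <| sdiff_subset.trans <|
      closure_minimal (hE.trans ball_subset_closedBall) isClosed_closedBall
  refine critExp_le_of_forall_accSeries_lt_top fun t ht => ?_
  obtain ⟨t', ht', ht't⟩ := ENNReal.lt_iff_exists_nnreal_btwn.1 ht
  obtain ⟨A, hA⟩ := exists_toNat_packingNumber_le_mul_rpow hL ht'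
  set K := ((4 * (c₂ + 2) + c₁) / c₁) ^ n
  refine accSeries_lt_top_of_card_shell_le (s' := t') (A := K * A) hE t.coe_nonneg
    (by exact_mod_cast ht't) fun k S hS => ?_
  have hδ : (0 : ℝ) < 2⁻¹ ^ k := by positivity
  calc (S.card : ℝ) ≤ K * (packingNumber (limitSet E) (2⁻¹ ^ k)).toNat :=
        card_le_mul_packingNumber_of_subset_shell hc₁ (by linarith) hδ hsep hwa hL hS
    _ ≤ K * (A * ((2⁻¹ : ℝ) ^ k) ^ (-(t' : ℝ))) := by
        gcongr
        exact hA _ hδ (pow_le_one₀ (by norm_num) (by norm_num))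
    _ = _ := by ring

/-- **Theorem (separated + well-approximated ⇒ δ(E) ≤ upper box dimension of L(E))**. -/
theorem critExp_le_upperBoxDim_limitSet {n : ℕ} (hn : 1 ≤ n)
    (E : Set (Pt n)) (hE : E ⊆ ball 0 1)
    (hdisc : IsDiscreteSet E) (hsep : SeparatedSet E) (hwa : WellApproximated E) :
    critExp E ≤ upperBoxDim (limitSet E) :=
  critExp_le_upperBoxDim_limitSet_general E hE hsep hwa
end
end

section
/- Let n ≥ 1 and let E ⊆ 𝔻ⁿ be any discrete set. Then the Hausdorff dimension of the radial limit set L_rad(E) is at most the critical exponent δ(E). -/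
open Metric Set Filter
open scoped ENNReal NNReal

noncomputable section

/-! A `c`-radial limit point of `E` lies in infinitely many of the balls
`B(x, c (1 - ‖x‖))`, `x ∈ E`, whose diameters have `s`-th powers summing to at most
`(2c)^s S_E(s)`. By the Hausdorff–Cantelli lemma (cover by the tails of this family), the set of
points lying in infinitely many of them is `μH[s]`-null as soon as `S_E(s) < ∞`. Finally
`L_rad(E)` is the countable union of the increasing sets `L_k(E)`, `k ∈ ℕ`. -/

open MeasureTheory Topology

section HausdorffCantelli

variable {ι X : Type*} [Countable ι] [EMetricSpace X] [MeasurableSpace X] [BorelSpace X]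

theorem hausdorffMeasure_limsup_cofinite_eq_zero (U : ι → Set X) {d : ℝ} (hd : 0 < d)
    (hU : ∑' i, ediam (U i) ^ d ≠ ∞) : μH[d] (limsup U cofinite) = 0 := by
  set tail : Finset ι → ℝ≥0∞ := fun F => ∑' i : {i // i ∉ F}, ediam (U i) ^ d
  have htail : Tendsto tail atTop (𝓝 0) := ENNReal.tendsto_tsum_compl_atTop_zero hU
  have hcover : ∀ F : Finset ι, limsup U cofinite ⊆ ⋃ i : {i // i ∉ F}, U i := by
    intro F z hz
    rw [cofinite.limsup_set_eq] at hz
    obtain ⟨i, hzi, hiF⟩ := hz.exists_notMem_finset F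
    exact mem_iUnion.2 ⟨⟨i, hiF⟩, hzi⟩
  have hdiam : ∀ F : Finset ι, ∀ i : {i // i ∉ F}, ediam (U i) ≤ tail F ^ d⁻¹ := fun F i =>
    (ENNReal.le_rpow_inv_iff hd).2 (ENNReal.le_tsum i)
  have hradius : Tendsto (fun F => tail F ^ d⁻¹) atTop (𝓝 0) := by
    simpa [ENNReal.zero_rpow_of_pos (inv_pos.2 hd)] using htail.ennrpow_const d⁻¹
  refine le_antisymm ?_ bot_le
  calc μH[d] (limsup U cofinite) ≤ liminf tail atTop :=
        Measure.hausdorffMeasure_le_liminf_tsum d _ _ hradius (fun F (i : {i // i ∉ F}) => U i)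
          (Eventually.of_forall hdiam) (Eventually.of_forall hcover)
    _ = 0 := htail.liminf_eq

theorem dimH_limsup_cofinite_le (U : ι → Set X) {d : ℝ≥0}
    (hU : ∑' i, ediam (U i) ^ (d : ℝ) ≠ ∞) : dimH (limsup U cofinite) ≤ d := by
  rcases eq_or_ne d 0 with rfl | hd
  · have : Finite ι := by
      by_contra hinf
      rw [not_finite_iff_infinite] at hinf
      simp only [NNReal.coe_zero, ENNReal.rpow_zero,
        ENNReal.tsum_const_eq_top_of_ne_zero one_ne_zero] at hU
      exact hU rfl
    simp [Filter.cofinite_eq_bot]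
  · refine dimH_le_of_hausdorffMeasure_ne_top ?_
    rw [hausdorffMeasure_limsup_cofinite_eq_zero U (by positivity) hU]
    exact ENNReal.zero_ne_top

end HausdorffCantelli

section RadialLimitSet

variable {n : ℕ} {E : Set (Pt n)}

theorem countable_of_accSeries_ne_top (hE : E ⊆ ball 0 1) {s : ℝ} (hs : accSeries E s ≠ ⊤) :
    E.Countable := by
  have hpos : ∀ x : E, ENNReal.ofReal ((1 - ‖(x : Pt n)‖) ^ s) ≠ 0 := fun x =>
    (ENNReal.ofReal_pos.2 (Real.rpow_pos_of_pos (sub_pos.2 (mem_ball_zero_iff.1 (hE x.2))) s)).ne'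
  simpa [Function.support_eq_univ hpos, countable_univ_iff, countable_coe_iff] using
    Summable.countable_support_ennreal hs

theorem radialPoints_mono (hE : E ⊆ ball 0 1) {c c' : ℝ} (hc : 0 < c) (hcc : c ≤ c') :
    radialPoints E c ⊆ radialPoints E c' := by
  rintro z ⟨hz, hzE⟩
  refine ⟨hz, fun r hr => ?_⟩
  obtain ⟨x, hx, hxz, hxr⟩ := hzE r hr
  have hx1 : 0 ≤ 1 - ‖x‖ := by linarith [mem_ball_zero_iff.1 (hE hx)]
  exact ⟨x, hx, hxz.trans (mul_le_mul_of_nonneg_right hcc hx1),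
    mul_le_mul_of_nonneg_left (le_of_mul_le_mul_left hxr hc) (hc.le.trans hcc)⟩

theorem radialLimitSet_subset_iUnion_nat (hE : E ⊆ ball 0 1) :
    radialLimitSet E ⊆ ⋃ k : ℕ, radialPoints E (k + 1) := by
  simp only [radialLimitSet, iUnion_subset_iff, mem_Ici]
  intro c hc
  exact (radialPoints_mono hE (by positivity) ((Nat.le_ceil c).trans (by linarith))).trans
    (subset_iUnion (fun k : ℕ => radialPoints E (k + 1)) ⌈c⌉₊)

theorem radialPoints_subset_limsup (hE : E ⊆ ball 0 1) {c : ℝ} (hc : 0 < c) :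
    radialPoints E c ⊆
      limsup (fun x : E => closedBall (x : Pt n) (c * (1 - ‖(x : Pt n)‖))) cofinite := by
  intro z hz
  rw [cofinite.limsup_set_eq]
  -- finitely many centres would bound `1 - ‖x‖` away from `0`
  intro hfin
  obtain ⟨x₀, hx₀E, hx₀z, -⟩ := hz.2 1 one_pos
  obtain ⟨a, -, hmin⟩ := Set.exists_min_image _ (fun x : E => 1 - ‖(x : Pt n)‖) hfin
    ⟨⟨x₀, hx₀E⟩, show z ∈ closedBall x₀ _ from mem_closedBall'.2 hx₀z⟩
  have ha : 0 < 1 - ‖(a : Pt n)‖ := sub_pos.2 (mem_ball_zero_iff.1 (hE a.2))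
  obtain ⟨x, hxE, hxz, hxr⟩ := hz.2 ((1 - ‖(a : Pt n)‖) / 2) (by positivity)
  have hax : 1 - ‖(a : Pt n)‖ ≤ 1 - ‖x‖ :=
    hmin ⟨x, hxE⟩ (show z ∈ closedBall x _ from mem_closedBall'.2 hxz)
  have hxa := le_of_mul_le_mul_left hxr hc
  linarith

theorem tsum_ediam_closedBall_rpow_le (hE : E ⊆ ball 0 1) {c : ℝ} (hc : 0 ≤ c) (s : ℝ≥0) :
    ∑' x : E, ediam (closedBall (x : Pt n) (c * (1 - ‖(x : Pt n)‖))) ^ (s : ℝ) ≤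
      ENNReal.ofReal (2 * c) ^ (s : ℝ) * accSeries E s := by
  rw [accSeries, ← ENNReal.tsum_mul_left]
  refine ENNReal.tsum_le_tsum fun x => ?_
  have hx : 0 ≤ 1 - ‖(x : Pt n)‖ := by linarith [mem_ball_zero_iff.1 (hE x.2)]
  have hdiam : ediam (closedBall (x : Pt n) (c * (1 - ‖(x : Pt n)‖))) ≤
      ENNReal.ofReal (2 * c) * ENNReal.ofReal (1 - ‖(x : Pt n)‖) := by
    rw [← ENNReal.ofReal_mul (by positivity), mul_assoc]
    exact ediam_le_of_forall_dist_le fun a ha b hb =>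
      (dist_le_diam_of_mem isBounded_closedBall ha hb).trans (diam_closedBall (by positivity))
  calc ediam (closedBall (x : Pt n) (c * (1 - ‖(x : Pt n)‖))) ^ (s : ℝ)
      ≤ (ENNReal.ofReal (2 * c) * ENNReal.ofReal (1 - ‖(x : Pt n)‖)) ^ (s : ℝ) := by gcongr
    _ = ENNReal.ofReal (2 * c) ^ (s : ℝ) * ENNReal.ofReal ((1 - ‖(x : Pt n)‖) ^ (s : ℝ)) := by
      rw [ENNReal.mul_rpow_of_nonneg _ _ s.coe_nonneg,
        ENNReal.ofReal_rpow_of_nonneg hx s.coe_nonneg]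

theorem dimH_radialPoints_le (hE : E ⊆ ball 0 1) {c : ℝ} (hc : 0 < c) {s : ℝ≥0}
    (hs : accSeries E s ≠ ⊤) : dimH (radialPoints E c) ≤ s := by
  have := (countable_of_accSeries_ne_top hE hs).to_subtype
  refine (dimH_mono (radialPoints_subset_limsup hE hc)).trans (dimH_limsup_cofinite_le _ ?_)
  refine ne_top_of_le_ne_top (ENNReal.mul_ne_top ?_ hs) (tsum_ediam_closedBall_rpow_le hE hc.le s)
  exact ENNReal.rpow_ne_top_of_nonneg s.coe_nonneg ENNReal.ofReal_ne_top

end RadialLimitSet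

theorem dimH_radialLimitSet_le_critExp_general {n : ℕ}
    (E : Set (Pt n)) (hE : E ⊆ ball 0 1) :
    dimH (radialLimitSet E) ≤ critExp E := by
  calc dimH (radialLimitSet E) ≤ ⨆ k : ℕ, dimH (radialPoints E (k + 1)) := by
        rw [← dimH_iUnion]; exact dimH_mono (radialLimitSet_subset_iUnion_nat hE)
    _ ≤ critExp E := iSup_le fun k => le_iInf₂ fun s hs =>
        dimH_radialPoints_le hE (by positivity) hs.ne

/-- **Theorem (Hausdorff dimension of the radial limit set is at most δ(E))**. -/
theorem dimH_radialLimitSet_le_critExp {n : ℕ} (hn : 1 ≤ n)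
    (E : Set (Pt n)) (hE : E ⊆ ball 0 1) (hdisc : IsDiscreteSet E) :
    dimH (radialLimitSet E) ≤ critExp E :=
  dimH_radialLimitSet_le_critExp_general E hE
end
end

section
/- Let n ≥ 1 and let E ⊆ 𝔻ⁿ be an arbitrary non-empty discrete set. Then the radial limit set L_rad(E) is a G_δσ set, i.e. a countable union of countable intersections of open subsets of ℝⁿ. -/
open Metric Set Filter
open scoped ENNReal NNReal

noncomputable section

/-!
`L_c(E)` is squeezed between G_δ sets: on the unit sphere, being `c`-radial is, up to enlarging
`c` slightly, the condition of lying for every `j` in the open set of points at distance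
`< c (1 - |x|)` from some `x ∈ E` with `1 - |x| < 1/(j+1)` (the enlargement turns `≤` into `<`
because `1 - |x| > 0` on `E ⊆ 𝔻ⁿ`). Taking `c` through the integers writes `L_rad(E)` as a
countable union of these G_δ sets.
-/

theorem exists_isOpen_iUnion_eq_iUnion_iInter_of_isGδ {X : Type*} [TopologicalSpace X]
    {A : ℕ → Set X} (hA : ∀ i, IsGδ (A i)) :
    ∃ U : ℕ → ℕ → Set X, (∀ i j, IsOpen (U i j)) ∧ ⋃ i, A i = ⋃ i, ⋂ j, U i j := by
  choose U hUo hU using fun i => (hA i).eq_iInter_nat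
  exact ⟨U, hUo, iUnion_congr hU⟩

def coneNbhd {n : ℕ} (E : Set (Pt n)) (c r : ℝ) : Set (Pt n) :=
  ⋃ x ∈ E, ⋃ (_ : 1 - ‖x‖ < r), ball x (c * (1 - ‖x‖))

def radialApprox {n : ℕ} (E : Set (Pt n)) (c : ℝ) : Set (Pt n) :=
  sphere 0 1 ∩ ⋂ j : ℕ, coneNbhd E c (1 / (j + 1))

section

variable {n : ℕ} {E : Set (Pt n)} {c r : ℝ} {z : Pt n}

theorem mem_coneNbhd :
    z ∈ coneNbhd E c r ↔ ∃ x ∈ E, 1 - ‖x‖ < r ∧ dist z x < c * (1 - ‖x‖) := by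
  simp only [coneNbhd, mem_iUnion, mem_ball, exists_prop]

theorem isOpen_coneNbhd : IsOpen (coneNbhd E c r) :=
  isOpen_biUnion fun _ _ => isOpen_iUnion fun _ => isOpen_ball

theorem isGδ_radialApprox : IsGδ (radialApprox E c) :=
  isClosed_sphere.isGδ.inter (.iInter_of_isOpen fun _ => isOpen_coneNbhd)

theorem radialPoints_subset_radialApprox (hE : E ⊆ ball 0 1) {c' : ℝ} (hc : 0 < c)
    (hcc' : c < c') : radialPoints E c ⊆ radialApprox E c' := by
  rintro z ⟨hz, hrad⟩
  refine ⟨mem_sphere_zero_iff_norm.mpr hz, mem_iInter.mpr fun j => mem_coneNbhd.mpr ?_⟩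
  obtain ⟨x, hxE, hxz, hxr⟩ := hrad (1 / (j + 2)) (by positivity)
  have hx : 0 < 1 - ‖x‖ := sub_pos.mpr (mem_ball_zero_iff.mp (hE hxE))
  have hj : (1 : ℝ) / (j + 2) < 1 / (j + 1) := by gcongr; linarith
  refine ⟨x, hxE, (le_of_mul_le_mul_left hxr hc).trans_lt hj, ?_⟩
  calc dist z x = dist x z := dist_comm z x
    _ ≤ c * (1 - ‖x‖) := hxz
    _ < c' * (1 - ‖x‖) := mul_lt_mul_of_pos_right hcc' hx

theorem radialApprox_subset_radialPoints (hc : 0 ≤ c) : radialApprox E c ⊆ radialPoints E c := by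
  rintro z ⟨hz, hcone⟩
  refine ⟨mem_sphere_zero_iff_norm.mp hz, fun r hr => ?_⟩
  obtain ⟨j, hj⟩ := exists_nat_one_div_lt hr
  obtain ⟨x, hxE, hxr, hzx⟩ := mem_coneNbhd.mp (mem_iInter.mp hcone j)
  rw [dist_comm] at hzx
  exact ⟨x, hxE, hzx.le, mul_le_mul_of_nonneg_left (hxr.trans hj).le hc⟩

theorem radialLimitSet_eq_iUnion_radialApprox (hE : E ⊆ ball 0 1) :
    radialLimitSet E = ⋃ k : ℕ, radialApprox E (k + 1) := by
  refine subset_antisymm (iUnion₂_subset fun c hc => ?_) (iUnion_subset fun k => ?_)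
  · have hc₁ : (1 : ℝ) ≤ c := hc
    exact (radialPoints_subset_radialApprox hE (by linarith)
      ((Nat.le_ceil c).trans_lt (lt_add_one _))).trans
      (subset_iUnion (fun k : ℕ => radialApprox E (k + 1)) ⌈c⌉₊)
  · exact (radialApprox_subset_radialPoints (by positivity)).trans
      (subset_biUnion_of_mem (u := radialPoints E) (by simp : (k : ℝ) + 1 ∈ Ici 1))

end

theorem radialLimitSet_isGdeltaSigma_general {n : ℕ}
    (E : Set (Pt n)) (hE : E ⊆ ball 0 1) :
    ∃ U : ℕ → ℕ → Set (Pt n), (∀ i j, IsOpen (U i j)) ∧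
      radialLimitSet E = ⋃ i, ⋂ j, U i j := by
  obtain ⟨U, hUo, hU⟩ := exists_isOpen_iUnion_eq_iUnion_iInter_of_isGδ fun k : ℕ =>
    isGδ_radialApprox (E := E) (c := k + 1)
  exact ⟨U, hUo, (radialLimitSet_eq_iUnion_radialApprox hE).trans hU⟩

/-- **Proposition: the radial limit set of a non-empty discrete set is a `G_δσ` set.** -/
theorem radialLimitSet_isGdeltaSigma {n : ℕ} (hn : 1 ≤ n)
    (E : Set (Pt n)) (hE : E ⊆ ball 0 1) (hEne : E.Nonempty) (hdisc : IsDiscreteSet E) :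
    ∃ U : ℕ → ℕ → Set (Pt n), (∀ i j, IsOpen (U i j)) ∧
      radialLimitSet E = ⋃ i, ⋂ j, U i j :=
  radialLimitSet_isGdeltaSigma_general E hE

end
end
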